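/- arXiv:1210.5363 — 3 statements merged into one kernel-verified Lean document; each statement's English description precedes it below -/
import Mathlib

section
/- Let T be a semi-complete digraph and k a nonnegative integer. If T contains a (5k+2, k)-degree tangle, then the pathwidth of T is strictly greater than k. -/
/-- A digraph (given by its arc relation) is semi-complete if it is simple (no loops;
multiple arcs are impossible in this encoding) and any two distinct vertices are
joined by an arc in at least one direction. -/
def SemiComplete {V : Type*} (E : V → V → Prop) : Prop :=
  (∀ v, ¬ E v v) ∧ ∀ v w : V, v ≠ w → E v w ∨ E w v

/-- The outdegree of a vertex: the number of its outneighbours. -/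
noncomputable def outdeg {V : Type*} (E : V → V → Prop) (v : V) : ℕ :=
  {w | E v w}.ncard

/-- A directed path, encoded as a nonempty list of pairwise distinct vertices in which
consecutive vertices are joined by arcs. -/
def IsDipath {V : Type*} (E : V → V → Prop) (p : List V) : Prop :=
  p ≠ [] ∧ p.Nodup ∧ p.Chain' E

/-- A directed path from `v` to `w`. -/
def PathFrom {V : Type*} (E : V → V → Prop) (v w : V) (p : List V) : Prop :=
  IsDipath E p ∧ p.head? = some v ∧ p.getLast? = some w

/-- The length of a path (its number of arcs). -/
def pathLen {V : Type*} (p : List V) : ℕ := p.length - 1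

/-- The internal vertices of a path: all vertices except the first and the last one. -/
def internals {V : Type*} (p : List V) : List V := (p.drop 1).dropLast

/-- The arcs of a path. -/
def arcsOf {V : Type*} (p : List V) : List (V × V) := p.zip (p.drop 1)

/-- A `(k,d)`-short jungle: a set `X` of at least `k` vertices such that for every ordered
pair of distinct vertices `v, w ∈ X` there are `k` pairwise distinct paths from `v` to `w`,
each of length at most `d`, that are pairwise internally vertex-disjoint. -/
def ShortJungle {V : Type*} (E : V → V → Prop) (k d : ℕ) (X : Set V) : Prop :=
  k ≤ X.ncard ∧ ∀ v ∈ X, ∀ w ∈ X, v ≠ w →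
    ∃ P : Fin k → List V, Function.Injective P ∧
      (∀ i, PathFrom E v w (P i) ∧ pathLen (P i) ≤ d) ∧
      (∀ i j, i ≠ j → ∀ z ∈ internals (P i), z ∉ internals (P j))

/-- A `(k,d)`-short immersion jungle: as a short jungle, but with the `k` paths required
to be pairwise arc-disjoint instead of internally vertex-disjoint. -/
def ShortImmersionJungle {V : Type*} (E : V → V → Prop) (k d : ℕ) (X : Set V) : Prop :=
  k ≤ X.ncard ∧ ∀ v ∈ X, ∀ w ∈ X, v ≠ w →
    ∃ P : Fin k → List V, Function.Injective P ∧
      (∀ i, PathFrom E v w (P i) ∧ pathLen (P i) ≤ d) ∧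
      (∀ i j, i ≠ j → ∀ a ∈ arcsOf (P i), a ∉ arcsOf (P j))

/-- `H` (arc relation `Eh`) is topologically contained in `G` (arc relation `Eg`):
there is an injective map `η` on vertices and, for every arc `(u,v)` of `H`, a directed
path in `G` from `η u` to `η v`, these paths being pairwise internally vertex-disjoint
with no internal vertex in the image of `η`. -/
def TopContain {W V : Type*} (Eh : W → W → Prop) (Eg : V → V → Prop) : Prop :=
  ∃ (η : W → V) (P : W → W → List V), Function.Injective η ∧
    (∀ u v : W, Eh u v → PathFrom Eg (η u) (η v) (P u v)) ∧
    (∀ u v : W, Eh u v → ∀ z ∈ internals (P u v), z ∉ Set.range η) ∧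
    (∀ u v u' v' : W, Eh u v → Eh u' v' → (u, v) ≠ (u', v') →
      ∀ z ∈ internals (P u v), z ∉ internals (P u' v'))

/-- `H` (arc relation `Eh`) is immersed in `G` (arc relation `Eg`): there is an injective
map `η` on vertices and, for every arc `(u,v)` of `H`, a directed path in `G` from `η u`
to `η v`, these paths being pairwise arc-disjoint. -/
def Immerses {W V : Type*} (Eh : W → W → Prop) (Eg : V → V → Prop) : Prop :=
  ∃ (η : W → V) (P : W → W → List V), Function.Injective η ∧
    (∀ u v : W, Eh u v → PathFrom Eg (η u) (η v) (P u v)) ∧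
    (∀ u v u' v' : W, Eh u v → Eh u' v' → (u, v) ≠ (u', v') →
      ∀ a ∈ arcsOf (P u v), a ∉ arcsOf (P u' v'))

/-- A path decomposition of the digraph with arc relation `E`, with bags `Bs 0, …, Bs (r-1)`. -/
def IsPathDecomp {V : Type*} {r : ℕ} (E : V → V → Prop) (Bs : Fin r → Set V) : Prop :=
  (⋃ i, Bs i) = Set.univ ∧
  (∀ i j l : Fin r, i < j → j < l → Bs i ∩ Bs l ⊆ Bs j) ∧
  (∀ u v : V, E u v →
    (∃ i, u ∈ Bs i ∧ v ∈ Bs i) ∨ ∃ i j : Fin r, j < i ∧ u ∈ Bs i ∧ v ∈ Bs j)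

/-- The pathwidth of a digraph: the least `p` admitting a path decomposition all of whose
bags have size at most `p + 1`. -/
noncomputable def pathwidth {V : Type*} (E : V → V → Prop) : ℕ :=
  sInf {p | ∃ (r : ℕ) (Bs : Fin r → Set V), IsPathDecomp E Bs ∧ ∀ i, (Bs i).ncard - 1 ≤ p}

/-- A separation of a digraph: a pair `(A,B)` covering all vertices with no arc from
`A \ B` to `B \ A`. -/
def IsSeparation {V : Type*} (E : V → V → Prop) (A B : Set V) : Prop :=
  A ∪ B = Set.univ ∧ ∀ v ∈ A \ B, ∀ w ∈ B \ A, ¬ E v w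

/-- A separation chain `((A 0, B 0), …, (A r, B r))`. -/
def IsSepChain {V : Type*} {r : ℕ} (E : V → V → Prop) (A B : Fin (r + 1) → Set V) : Prop :=
  A 0 = ∅ ∧ B 0 = Set.univ ∧ A (Fin.last r) = Set.univ ∧ B (Fin.last r) = ∅ ∧
  (∀ i, IsSeparation E (A i) (B i)) ∧
  (∀ i j : Fin (r + 1), i ≤ j → A i ⊆ A j ∧ B j ⊆ B i)

/-- A `(k,ℓ)`-degree tangle: at least `k` vertices whose outdegrees pairwise differ
by at most `ℓ`. -/
def DegreeTangle {V : Type*} (E : V → V → Prop) (k ℓ : ℕ) (X : Set V) : Prop :=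
  k ≤ X.ncard ∧ ∀ v ∈ X, ∀ w ∈ X, outdeg E v ≤ outdeg E w + ℓ

/-- A `(k,ℓ)`-matching tangle: disjoint sets `X`, `Y` of size `k` with a matching from `X`
to `Y`, where every vertex of `Y` has outdegree more than `ℓ` larger than every vertex
of `X`. -/
def MatchingTangle {V : Type*} (E : V → V → Prop) (k ℓ : ℕ) (X Y : Set V) : Prop :=
  Disjoint X Y ∧ X.ncard = k ∧ Y.ncard = k ∧
  (∃ f : V → V, Set.BijOn f X Y ∧ ∀ v ∈ X, E v (f v)) ∧
  (∀ v ∈ X, ∀ w ∈ Y, outdeg E v + ℓ < outdeg E w)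

/-- A `k`-backward tangle: a partition `(X,Y)` of the vertex set with at least `k` arcs
from `X` to `Y`, and every outdegree in `Y` at least every outdegree in `X`. -/
def BackwardTangle {V : Type*} (E : V → V → Prop) (k : ℕ) (X Y : Set V) : Prop :=
  X ∪ Y = Set.univ ∧ Disjoint X Y ∧
  k ≤ {p : V × V | p.1 ∈ X ∧ p.2 ∈ Y ∧ E p.1 p.2}.ncard ∧
  (∀ v ∈ X, ∀ w ∈ Y, outdeg E v ≤ outdeg E w)

/-- The width of an ordering of the vertices (given as a bijection from `Fin n`):
the maximum, over prefixes, of the number of arcs leaving the prefix forward. -/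
noncomputable def orderWidth {V : Type*} [Fintype V] (E : V → V → Prop)
    (e : Fin (Fintype.card V) ≃ V) : ℕ :=
  ⨆ α : Fin (Fintype.card V + 1),
    {p : V × V | ((e.symm p.1 : ℕ) < (α : ℕ)) ∧ ¬ ((e.symm p.2 : ℕ) < (α : ℕ)) ∧
      E p.1 p.2}.ncard

/-- The cutwidth of a digraph: the minimum width over all orderings of the vertices. -/
noncomputable def cutwidth {V : Type*} [Fintype V] (E : V → V → Prop) : ℕ :=
  ⨅ e : Fin (Fintype.card V) ≃ V, orderWidth E e

/-- `(X,Y)` is a bipartition of the simple graph `G`. -/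
def IsBipartition {V : Type*} (G : SimpleGraph V) (X Y : Set V) : Prop :=
  X ∪ Y = Set.univ ∧ Disjoint X Y ∧
  ∀ u v : V, G.Adj u v → (u ∈ X ∧ v ∈ Y) ∨ (u ∈ Y ∧ v ∈ X)

/-- A matching of `G`: a set of edges of `G` that are pairwise vertex-disjoint. -/
def IsMatching {V : Type*} (G : SimpleGraph V) (M : Set (Sym2 V)) : Prop :=
  M ⊆ G.edgeSet ∧ ∀ e ∈ M, ∀ f ∈ M, e ≠ f → ∀ v : V, v ∈ e → v ∉ f

/-- A maximum matching of `G`. -/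
def IsMaxMatching {V : Type*} [Fintype V] (G : SimpleGraph V) (M : Set (Sym2 V)) : Prop :=
  IsMatching G M ∧ ∀ N : Set (Sym2 V), IsMatching G N → N.ncard ≤ M.ncard

/-- A vertex is covered by a matching if it is an endpoint of one of its edges. -/
def CoveredBy {V : Type*} (M : Set (Sym2 V)) (v : V) : Prop := ∃ e ∈ M, v ∈ e

/-- A vertex is covered by every maximum matching of `G`. -/
def CoveredByAllMax {V : Type*} [Fintype V] (G : SimpleGraph V) (v : V) : Prop :=
  ∀ M : Set (Sym2 V), IsMaxMatching G M → CoveredBy M v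

/-- Deletion of the vertex `w` from a simple graph (keeping the vertex type). -/
def deleteVert {V : Type*} (G : SimpleGraph V) (w : V) : SimpleGraph V where
  Adj x y := G.Adj x y ∧ x ≠ w ∧ y ≠ w
  symm := ⟨fun _ _ h => ⟨h.1.symm, h.2.2, h.2.1⟩⟩
  loopless := ⟨fun x h => G.loopless.irrefl x h.1⟩

/-- An `M`-alternating path from `u` to `v`: a (possibly trivial) path starting at `u` and
ending at `v` whose edges alternate between non-matching and matching edges, beginning
with a non-matching edge. -/
def AltPathFrom {V : Type*} (G : SimpleGraph V) (M : Set (Sym2 V)) (u v : V) : Prop :=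
  ∃ p : List V, p ≠ [] ∧ p.Nodup ∧ p.Chain' G.Adj ∧
    p.head? = some u ∧ p.getLast? = some v ∧
    ∀ i : ℕ, (h : i + 1 < p.length) →
      (s(p.get ⟨i, Nat.lt_of_succ_lt h⟩, p.get ⟨i + 1, h⟩) ∈ M ↔ i % 2 = 1)

/-!
Cut a path decomposition of width at most `k` just after the first bag `W` in which some vertex
`p` of the tangle `X` is seen for the last time. This gives a separation `(A, B)` with
`p ∈ A \ B` such that both `X ∩ A` and the separator `A ∩ B` lie in `W`; as `p ∉ A ∩ B`, the
separator has at most `k` vertices. Every outneighbour of `p` lies in `A`, so `d⁺(p) < |A|`.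
On the other hand at least `4k + 1` vertices of `X` lie outside `A`; among them some `q` beats
half of the others, and `q` also beats all of `A \ B`, whence
`d⁺(q) ≥ |A \ B| + 2k ≥ |A| + k > d⁺(p) + k`, contradicting the tangle.
-/

open Finset in
theorem exists_ncard_le_two_mul_ncard_setOf_adj_add_one {V : Type*} {E : V → V → Prop}
    (htot : ∀ v w, v ≠ w → E v w ∨ E w v) {S : Set V} (hS : S.Finite) (hne : S.Nonempty) :
    ∃ v ∈ S, S.ncard ≤ 2 * {w ∈ S | E v w}.ncard + 1 := by
  classical
  lift S to Finset V using hS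
  have hout_add_in : ∀ v ∈ S, #S - 1 ≤ #(S.bipartiteAbove E v) + #(S.bipartiteBelow E v) := by
    intro v hv
    calc #S - 1 = #(S.erase v) := (card_erase_of_mem hv).symm
      _ ≤ #(S.bipartiteAbove E v ∪ S.bipartiteBelow E v) := by
          refine card_le_card fun w hw => ?_
          obtain ⟨hwv, hwS⟩ := mem_erase.mp hw
          rcases htot v w (Ne.symm hwv) with h | h <;> simp [hwS, h]
      _ ≤ _ := card_union_le _ _
  have hsum : ∑ _v ∈ S, (#S - 1) ≤ ∑ v ∈ S, 2 * #(S.bipartiteAbove E v) :=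
    calc ∑ _v ∈ S, (#S - 1)
        ≤ ∑ v ∈ S, (#(S.bipartiteAbove E v) + #(S.bipartiteBelow E v)) := sum_le_sum hout_add_in
      _ = ∑ v ∈ S, 2 * #(S.bipartiteAbove E v) := by
          rw [sum_add_distrib, ← sum_card_bipartiteAbove_eq_sum_card_bipartiteBelow, ← mul_sum]
          ring
  obtain ⟨v, hv, hle⟩ := exists_le_of_sum_le (coe_nonempty.mp hne) hsum
  refine ⟨v, hv, ?_⟩
  have hout : {w ∈ (S : Set V) | E v w} = ↑(S.bipartiteAbove E v) := by ext; simp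
  rw [Set.ncard_coe_finset, hout, Set.ncard_coe_finset]
  omega

namespace IsSeparation

variable {V : Type*} {E : V → V → Prop} {A B : Set V}

theorem setOf_adj_subset (h : IsSeparation E A B) {p : V} (hp : p ∈ A \ B) :
    {w | E p w} ⊆ A := by
  intro w hw
  by_contra hwA
  have hwB : w ∈ B := (h.1.symm ▸ Set.mem_univ w : w ∈ A ∪ B).resolve_left hwA
  exact h.2 p hp w ⟨hwB, hwA⟩ hw

theorem outdeg_lt_ncard [Finite V] (hloop : ∀ v, ¬ E v v) (h : IsSeparation E A B) {p : V}
    (hp : p ∈ A \ B) : outdeg E p < A.ncard := by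
  have hsub : insert p {w | E p w} ⊆ A := Set.insert_subset hp.1 (h.setOf_adj_subset hp)
  have := Set.ncard_le_ncard hsub
  rwa [Set.ncard_insert_of_notMem (s := {w | E p w}) (hloop p)] at this

theorem diff_subset_setOf_adj (htot : ∀ v w, v ≠ w → E v w ∨ E w v) (h : IsSeparation E A B)
    {q : V} (hq : q ∉ A) : A \ B ⊆ {w | E q w} := by
  intro w hw
  have hqw : q ≠ w := fun hqw => hq (hqw ▸ hw.1)
  exact (htot q w hqw).resolve_right fun hwq => hq (h.setOf_adj_subset hw hwq)

end IsSeparation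

theorem exists_outdeg_add_lt_of_isSeparation {V : Type*} [Finite V] {E : V → V → Prop}
    (hT : SemiComplete E) {A B X : Set V} (hsep : IsSeparation E A B) {p : V}
    (hp : p ∈ (X ∩ A) \ B) {k : ℕ} (hbag : (X ∩ A ∪ A ∩ B).ncard ≤ k + 1)
    (hX : 5 * k + 2 ≤ X.ncard) : ∃ q ∈ X, outdeg E p + k < outdeg E q := by
  have hsep_card : (A ∩ B).ncard + 1 ≤ k + 1 :=
    calc (A ∩ B).ncard + 1 = (insert p (A ∩ B)).ncard :=
          (Set.ncard_insert_of_notMem fun h => hp.2 h.2).symm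
      _ ≤ (X ∩ A ∪ A ∩ B).ncard :=
          Set.ncard_le_ncard (Set.insert_subset (Or.inl hp.1) Set.subset_union_right)
      _ ≤ k + 1 := hbag
  have hXA : (X ∩ A).ncard ≤ k + 1 := (Set.ncard_le_ncard Set.subset_union_left).trans hbag
  have hXcard := Set.ncard_inter_add_ncard_sdiff_eq_ncard X A
  have hAcard := Set.ncard_inter_add_ncard_sdiff_eq_ncard A B
  obtain ⟨q, hq, hq_beats⟩ := exists_ncard_le_two_mul_ncard_setOf_adj_add_one hT.2
    (Set.toFinite (X \ A)) (Set.nonempty_of_ncard_ne_zero (by omega))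
  have hq_deg : (A \ B).ncard + {w ∈ X \ A | E q w}.ncard ≤ outdeg E q := by
    rw [← Set.ncard_union_eq (Set.disjoint_left.mpr fun w hw hw' => hw'.1.2 hw.1)]
    exact Set.ncard_le_ncard
      (Set.union_subset (hsep.diff_subset_setOf_adj hT.2 hq.2) fun w hw => hw.2)
  have hp_deg := hsep.outdeg_lt_ncard hT.1 ⟨hp.1.2, hp.2⟩
  exact ⟨q, hq.1, by omega⟩

section PathDecomposition

variable {V : Type*} {r : ℕ}

def bagsBelow (Bs : Fin r → Set V) (i : ℕ) : Set V := {v | ∃ j : Fin r, (j : ℕ) < i ∧ v ∈ Bs j}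

def bagsFrom (Bs : Fin r → Set V) (i : ℕ) : Set V := {v | ∃ j : Fin r, i ≤ (j : ℕ) ∧ v ∈ Bs j}

variable {Bs : Fin r → Set V}

theorem mem_bagsBelow_or_mem_bagsFrom (hcover : (⋃ j, Bs j) = Set.univ) (i : ℕ) (v : V) :
    v ∈ bagsBelow Bs i ∨ v ∈ bagsFrom Bs i := by
  obtain ⟨j, hj⟩ := Set.mem_iUnion.mp (hcover ▸ Set.mem_univ v : v ∈ ⋃ j, Bs j)
  rcases lt_or_ge (j : ℕ) i with h | h
  exacts [Or.inl ⟨j, h, hj⟩, Or.inr ⟨j, h, hj⟩]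

theorem isSeparation_bagsBelow_bagsFrom {E : V → V → Prop} (hBs : IsPathDecomp E Bs) (i : ℕ) :
    IsSeparation E (bagsBelow Bs i) (bagsFrom Bs i) := by
  refine ⟨Set.eq_univ_of_forall (mem_bagsBelow_or_mem_bagsFrom hBs.1 i), ?_⟩
  rintro u ⟨-, hu⟩ v ⟨-, hv⟩ huv
  have hu : ∀ j : Fin r, u ∈ Bs j → (j : ℕ) < i := fun j hj => by
    by_contra h
    exact hu ⟨j, not_lt.mp h, hj⟩
  have hv : ∀ j : Fin r, v ∈ Bs j → i ≤ (j : ℕ) := fun j hj => by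
    by_contra h
    exact hv ⟨j, not_le.mp h, hj⟩
  rcases hBs.2.2 u v huv with ⟨j, huj, hvj⟩ | ⟨j, l, hlj, huj, hvl⟩
  · exact absurd (hu j huj) (not_lt.mpr (hv j hvj))
  · exact absurd (hu j huj) (not_lt.mpr ((hv l hvl).trans (Fin.le_of_lt hlj)))

theorem mem_bag_of_mem_bagsBelow_of_mem_bagsFrom
    (hBs : ∀ i j l : Fin r, i < j → j < l → Bs i ∩ Bs l ⊆ Bs j) {i : Fin r} {v : V}
    (hbelow : v ∈ bagsBelow Bs (i + 1)) (hfrom : v ∈ bagsFrom Bs i) : v ∈ Bs i := by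
  obtain ⟨a, ha, hva⟩ := hbelow
  obtain ⟨b, hb, hvb⟩ := hfrom
  rcases (Nat.lt_succ_iff.mp ha).lt_or_eq with ha | ha
  · rcases hb.lt_or_eq with hb | hb
    · exact hBs a i b ha hb ⟨hva, hvb⟩
    · rwa [← Fin.ext hb] at hvb
  · rwa [← Fin.ext ha]

theorem IsPathDecomp.exists_isSeparation {E : V → V → Prop} (hBs : IsPathDecomp E Bs)
    {X : Set V} (hX : X.Nonempty) :
    ∃ A B, IsSeparation E A B ∧ ((X ∩ A) \ B).Nonempty ∧ ∃ i, X ∩ A ∪ A ∩ B ⊆ Bs i := by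
  classical
  have hlast : ((X ∩ bagsBelow Bs r) \ bagsFrom Bs r).Nonempty := by
    obtain ⟨x, hx⟩ := hX
    obtain ⟨j, hj⟩ := Set.mem_iUnion.mp (hBs.1 ▸ Set.mem_univ x : x ∈ ⋃ j, Bs j)
    exact ⟨x, ⟨hx, j, j.2, hj⟩, fun ⟨l, hl, _⟩ => absurd l.2 (not_lt.mpr hl)⟩
  have hex : ∃ α, ((X ∩ bagsBelow Bs α) \ bagsFrom Bs α).Nonempty := ⟨r, hlast⟩
  -- the first cut behind which some vertex of `X` stays for good
  set α := Nat.find hex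
  obtain ⟨-, ⟨-, j, hj, -⟩, -⟩ := Nat.find_spec hex
  set i : Fin r := ⟨α - 1, by have : α ≤ r := Nat.find_le hlast; omega⟩
  have hi : (i : ℕ) + 1 = α := by simp only [i]; omega
  refine ⟨_, _, isSeparation_bagsBelow_bagsFrom hBs α, Nat.find_spec hex, i, ?_⟩
  have hfrom : ∀ v ∈ X ∩ bagsBelow Bs α ∪ bagsBelow Bs α ∩ bagsFrom Bs α, v ∈ bagsFrom Bs i := by
    rintro v (⟨hvX, -⟩ | ⟨-, l, hl, hvl⟩)
    · by_contra hv
      have hvbelow := (mem_bagsBelow_or_mem_bagsFrom hBs.1 i v).resolve_right hv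
      exact Nat.find_min hex (by omega : (i : ℕ) < α) ⟨v, ⟨hvX, hvbelow⟩, hv⟩
    · exact ⟨l, by omega, hvl⟩
  intro v hv
  refine mem_bag_of_mem_bagsBelow_of_mem_bagsFrom hBs.2.1 ?_ (hfrom v hv)
  rw [hi]
  rcases hv with ⟨-, h⟩ | ⟨h, -⟩ <;> exact h

end PathDecomposition

theorem exists_isPathDecomp_ncard_sub_one_le_pathwidth {V : Type*} (E : V → V → Prop) :
    ∃ (r : ℕ) (Bs : Fin r → Set V), IsPathDecomp E Bs ∧ ∀ i, (Bs i).ncard - 1 ≤ pathwidth E :=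
  Nat.sInf_mem (s := {p | ∃ (r : ℕ) (Bs : Fin r → Set V), IsPathDecomp E Bs ∧
      ∀ i, (Bs i).ncard - 1 ≤ p}) ⟨_, 1, fun _ => Set.univ,
    ⟨Set.iUnion_const _, fun _ _ _ _ _ => Set.inter_subset_left,
      fun _ _ _ => Or.inl ⟨0, trivial, trivial⟩⟩,
    fun _ => Nat.sub_le _ 1⟩

/-- A semi-complete digraph containing a `(5k+2, k)`-degree tangle has
pathwidth greater than `k`. -/
theorem stmt_6 {V : Type*} [Fintype V] (E : V → V → Prop) (hT : SemiComplete E)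
    (k : ℕ) (X : Set V) (hX : DegreeTangle E (5 * k + 2) k X) :
    k < pathwidth E := by
  by_contra! hpw
  obtain ⟨hXcard, htangle⟩ := hX
  obtain ⟨r, Bs, hBs, hwidth⟩ := exists_isPathDecomp_ncard_sub_one_le_pathwidth E
  obtain ⟨A, B, hsep, ⟨p, hp⟩, i, hbag⟩ :=
    hBs.exists_isSeparation (Set.nonempty_of_ncard_ne_zero (s := X) (by omega))
  have hbag_card : (X ∩ A ∪ A ∩ B).ncard ≤ k + 1 := by
    have := Set.ncard_le_ncard hbag
    have := hwidth i
    omega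
  obtain ⟨q, hqX, hq⟩ := exists_outdeg_add_lt_of_isSeparation hT hsep hp hbag_card hXcard
  exact (htangle q hqX p hp.1.1).not_gt hq
end

section
/- Let T be a semi-complete digraph, k a positive integer, and let X be a (26k, k)-degree tangle in T. Then X contains a (k,3)-short jungle, i.e., there is a subset Z ⊆ X with |Z| ≥ k such that for every v, w ∈ Z there exist k paths from v to w of length at most 3 that are pairwise internally vertex-disjoint. -/
open Finset

section Jungle

variable {V : Type*}

lemma card_le_two_mul_add_one_of_card_filter_le [DecidableEq V] {R : V → V → Prop}
    [DecidableRel R] {M : Finset V} {c : ℕ} (htotal : ∀ a ∈ M, ∀ b ∈ M, a ≠ b → R a b ∨ R b a)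
    (hout : ∀ a ∈ M, #(M.filter (R a)) ≤ c) : #M ≤ 2 * c + 1 := by
  have hin : ∑ a ∈ M, #(M.filter (R · a)) = ∑ a ∈ M, #(M.filter (R a)) := by
    simp only [card_filter]
    exact sum_comm
  have hpairs : #M * (#M - 1) ≤ #M * (2 * c) := calc
    #M * (#M - 1) = ∑ a ∈ M, #(M.erase a) := by
      rw [sum_congr rfl fun a ha => card_erase_of_mem ha, sum_const, smul_eq_mul]
    _ ≤ ∑ a ∈ M, (#(M.filter (R a)) + #(M.filter (R · a))) := by
      refine sum_le_sum fun a ha => (card_le_card fun b hb => ?_).trans (card_union_le _ _)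
      obtain ⟨hba, hb⟩ := mem_erase.1 hb
      rcases htotal a ha b hb hba.symm with hab | hba
      · exact mem_union_left _ (mem_filter.2 ⟨hb, hab⟩)
      · exact mem_union_right _ (mem_filter.2 ⟨hb, hba⟩)
    _ = 2 * ∑ a ∈ M, #(M.filter (R a)) := by rw [sum_add_distrib, hin, two_mul]
    _ ≤ 2 * (#M * c) := by
      gcongr
      simpa using sum_le_card_nsmul M _ c hout
    _ = #M * (2 * c) := by ring
  rcases M.eq_empty_or_nonempty with rfl | hM
  · simp
  · have := Nat.le_of_mul_le_mul_left hpairs hM.card_pos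
    omega

lemma card_le_outdeg [Finite V] {E : V → V → Prop} {b : V} {S : Finset V}
    (h : ∀ u ∈ S, E b u) : #S ≤ outdeg E b := by
  rw [outdeg, ← Set.ncard_coe_finset]
  exact Set.ncard_le_ncard h

lemma outdeg_le_card {E : V → V → Prop} {v : V} {S : Finset V} (h : ∀ u, E v u → u ∈ S) :
    outdeg E v ≤ #S := by
  rw [outdeg, ← Set.ncard_coe_finset]
  exact Set.ncard_le_ncard h

lemma length_internals (p : List V) : (internals p).length = p.length - 2 := by
  simp only [internals, List.length_dropLast, List.length_drop]
  omega

lemma exists_pairwise_disjoint_family {α : Type*} [DecidableEq V] {Good : α → Prop}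
    {S : α → Finset V} {m : ℕ} (hS : ∀ a, Good a → #(S a) ≤ m) : ∀ k : ℕ,
    (∀ U : Finset V, #U + m ≤ m * k → ∃ a, Good a ∧ Disjoint (S a) U) →
    ∃ P : Fin k → α, (∀ i, Good (P i)) ∧ Pairwise fun i j => Disjoint (S (P i)) (S (P j))
  | 0, _ => ⟨Fin.elim0, fun i => i.elim0, fun i => i.elim0⟩
  | k + 1, h => by
    obtain ⟨P, hP, hdisj⟩ := exists_pairwise_disjoint_family hS k fun U hU =>
      h U (hU.trans (Nat.mul_le_mul_left m k.le_succ))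
    set U := univ.biUnion fun i => S (P i)
    have hU : #U ≤ m * k := by
      simpa [mul_comm] using
        card_biUnion_le_card_mul univ (fun i => S (P i)) m fun i _ => hS _ (hP i)
    obtain ⟨a, ha, haU⟩ := h U (by rw [Nat.mul_succ]; omega)
    have hfresh : ∀ i, Disjoint (S a) (S (P i)) := fun i =>
      haU.mono_right (subset_biUnion_of_mem (fun i => S (P i)) (mem_univ i))
    refine ⟨Fin.cons a P, fun i => i.cases ha hP, fun i j hij => ?_⟩
    cases i using Fin.cases <;> cases j using Fin.cases
    · exact absurd rfl hij
    · exact hfresh _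
    · exact (hfresh _).symm
    · exact hdisj fun h => hij (congrArg Fin.succ h)

lemma shortJungle_of_forall_exists_path_avoiding [DecidableEq V] {E : V → V → Prop}
    {k d : ℕ} {Z : Set V} (hZ : k ≤ Z.ncard)
    (h : ∀ v ∈ Z, ∀ w ∈ Z, v ≠ w → ∀ U : Finset V, #U + (d - 1) ≤ (d - 1) * k →
      ∃ p, (PathFrom E v w p ∧ pathLen p ≤ d ∧ internals p ≠ []) ∧
        ∀ z ∈ internals p, z ∉ U) :
    ShortJungle E k d Z := by
  refine ⟨hZ, fun v hv w hw hvw => ?_⟩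
  have hS : ∀ p : List V, PathFrom E v w p ∧ pathLen p ≤ d ∧ internals p ≠ [] →
      #(internals p).toFinset ≤ d - 1 := fun p ⟨_, hp, _⟩ =>
    (List.toFinset_card_le _).trans (by rw [length_internals]; unfold pathLen at hp; omega)
  obtain ⟨P, hP, hdisj⟩ := exists_pairwise_disjoint_family hS k fun U hU => by
    obtain ⟨p, hp, hpU⟩ := h v hv w hw hvw U hU
    exact ⟨p, hp, disjoint_left.2 fun z hz => hpU z (List.mem_toFinset.1 hz)⟩
  have hdisj' : ∀ i j, i ≠ j → ∀ z ∈ internals (P i), z ∉ internals (P j) :=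
    fun i j hij z hzi hzj => disjoint_left.1 (hdisj hij) (List.mem_toFinset.2 hzi)
      (List.mem_toFinset.2 hzj)
  refine ⟨P, fun i j hPij => ?_, fun i => ⟨(hP i).1, (hP i).2.1⟩, hdisj'⟩
  by_contra hij
  obtain ⟨z, hz⟩ := List.exists_mem_of_ne_nil _ (hP i).2.2
  exact hdisj' i j hij z hz (hPij ▸ hz)

lemma exists_pathFrom_of_route {E : V → V → Prop} (hloop : ∀ a, ¬ E a a) {F : Finset V}
    {v w : V} (hvF : v ∈ F) (hwF : w ∈ F) (hvw : v ≠ w)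
    (h : (∃ x ∉ F, E v x ∧ E x w) ∨ ∃ a ∉ F, ∃ b ∉ F, E v a ∧ E a b ∧ E b w) :
    ∃ p, (PathFrom E v w p ∧ pathLen p ≤ 3 ∧ internals p ≠ []) ∧ ∀ z ∈ internals p, z ∉ F := by
  rcases h with ⟨x, hx, hvx, hxw⟩ | ⟨a, ha, b, hb, hva, hab, hbw⟩
  · have hvx' : v ≠ x := ne_of_mem_of_not_mem hvF hx
    have hwx : w ≠ x := ne_of_mem_of_not_mem hwF hx
    refine ⟨[v, x, w], ⟨⟨⟨by simp, ?_, .cons_cons hvx (.cons_cons hxw (.singleton w))⟩,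
      rfl, rfl⟩, by simp [pathLen], by simp [internals]⟩, by simpa [internals] using hx⟩
    simp [hvw, hvx', hwx.symm]
  · have hva' : v ≠ a := ne_of_mem_of_not_mem hvF ha
    have hwa : w ≠ a := ne_of_mem_of_not_mem hwF ha
    have hvb : v ≠ b := ne_of_mem_of_not_mem hvF hb
    have hwb : w ≠ b := ne_of_mem_of_not_mem hwF hb
    have hab' : a ≠ b := by rintro rfl; exact hloop a hab
    refine ⟨[v, a, b, w], ⟨⟨⟨by simp, ?_,
      .cons_cons hva (.cons_cons hab (.cons_cons hbw (.singleton w)))⟩, rfl, rfl⟩,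
      by simp [pathLen], by simp [internals]⟩, by simp [internals, ha, hb]⟩
    simp [hvw, hva', hvb, hab', hwa.symm, hwb.symm]

lemma exists_route_avoiding [Fintype V] [DecidableEq V] {E : V → V → Prop} [DecidableRel E]
    (hT : SemiComplete E) {k : ℕ} {Y F : Finset V} {v w : V}
    (hdeg : ∀ b ∈ Y, outdeg E b ≤ outdeg E v + k) (hw : 9 * k < #(Y.filter (E · w)))
    (hvF : v ∈ F) (hF : #F ≤ 2 * k) :
    (∃ x ∉ F, E v x ∧ E x w) ∨ ∃ a ∉ F, ∃ b ∉ F, E v a ∧ E a b ∧ E b w := by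
  by_contra! ⟨hnoMid, hnoArc⟩
  set A := (univ \ F).filter (E v)
  set M := (Y \ F).filter (E · w)
  have hM : 7 * k < #M := by
    have : Y.filter (E · w) ⊆ M ∪ F := fun u hu => by
      by_cases huF : u ∈ F
      · exact mem_union_right _ huF
      · simp_all [M]
    have := (card_le_card this).trans (card_union_le M F)
    omega
  have hA : outdeg E v ≤ #A + 2 * k := by
    have : outdeg E v ≤ #(A ∪ F) := outdeg_le_card fun u hu => by
      by_cases huF : u ∈ F
      · exact mem_union_right _ huF
      · simp [A, hu, huF]
    have := this.trans (card_union_le A F)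
    omega
  have hMout : ∀ b ∈ M, #(M.filter (E b)) ≤ 3 * k - 1 := by
    intro b hb
    obtain ⟨⟨hbY, hbF⟩, hbw⟩ := by simpa [M] using hb
    -- `b` beats `v` and all of `A`: `A` is disjoint from `M` and sends no arc into it
    have hbv : E b v := (hT.2 v b (ne_of_mem_of_not_mem hvF hbF)).resolve_left (hnoMid b hbF · hbw)
    have hbA : ∀ a ∈ A, E b a := fun a ha => by
      obtain ⟨haF, hva⟩ : a ∉ F ∧ E v a := by simpa [A] using ha
      have hab : a ≠ b := fun h => hnoMid a haF hva (h ▸ hbw)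
      exact (hT.2 a b hab).resolve_left (hnoArc a haF b hbF hva · hbw)
    have hvAM : v ∉ A ∪ M.filter (E b) := by simp [A, M, hvF]
    have hAM : Disjoint A (M.filter (E b)) := disjoint_left.2 fun a ha haM => by
      simp only [A, M, mem_filter, mem_sdiff] at ha haM
      exact hnoMid a ha.1.2 ha.2 haM.1.2
    have hout : #(insert v (A ∪ M.filter (E b))) ≤ outdeg E b := card_le_outdeg fun u hu => by
      rcases mem_insert.1 hu with rfl | hu
      · exact hbv
      · rcases mem_union.1 hu with hu | hu
        · exact hbA u hu
        · exact (mem_filter.1 hu).2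
    rw [card_insert_of_notMem hvAM, card_union_of_disjoint hAM] at hout
    have := hdeg b hbY
    omega
  have := card_le_two_mul_add_one_of_card_filter_le (fun a _ b _ hab => hT.2 a b hab) hMout
  have : 0 < #F := card_pos.2 ⟨v, hvF⟩
  omega

end Jungle

theorem stmt_7_general {V : Type*} [Fintype V] (E : V → V → Prop) (hT : SemiComplete E)
    (k : ℕ) (X : Set V) (hX : DegreeTangle E (26 * k) k X) :
    ∃ Z : Set V, Z ⊆ X ∧ ShortJungle E k 3 Z := by
  classical
  obtain ⟨hXcard, hdeg⟩ := hX
  set Y := X.toFinset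
  have hY : 26 * k ≤ #Y := by rwa [Set.ncard_eq_toFinset_card'] at hXcard
  -- in-degrees inside `Bad` are at most `9 * k`, which bounds its size
  set Bad := Y.filter fun w => #(Y.filter (E · w)) ≤ 9 * k
  have hBad : #Bad ≤ 2 * (9 * k) + 1 :=
    card_le_two_mul_add_one_of_card_filter_le (R := fun a b => E b a)
      (fun a _ b _ hab => hT.2 b a hab.symm)
      fun b hb => (card_le_card (filter_subset_filter _ (filter_subset _ _))).trans
        (mem_filter.1 hb).2
  refine ⟨↑(Y \ Bad), fun z hz => by simp_all [Y], ?_⟩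
  refine shortJungle_of_forall_exists_path_avoiding ?_ fun v hv w hw hvw U hU => ?_
  · rw [Set.ncard_coe_finset]
    have := le_card_sdiff Bad Y
    omega
  · simp only [coe_sdiff, Set.mem_sdiff, mem_coe, Bad, mem_filter, not_and, not_le] at hv hw
    have hF : #(insert v (insert w U)) ≤ 2 * k :=
      (card_insert_le _ _).trans (by have := card_insert_le w U; omega)
    obtain ⟨p, hp, hpF⟩ := exists_pathFrom_of_route hT.1 (mem_insert_self v _)
      (mem_insert_of_mem (mem_insert_self w U)) hvw (exists_route_avoiding hT
        (fun b hb => hdeg b (by simpa [Y] using hb) v (by simpa [Y] using hv.1)) (hw.2 hw.1)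
        (mem_insert_self v _) hF)
    exact ⟨p, hp, fun z hz hzU => hpF z hz (mem_insert_of_mem (mem_insert_of_mem hzU))⟩

/-- A `(26k, k)`-degree tangle in a semi-complete digraph contains a
`(k, 3)`-short jungle. -/
theorem stmt_7 {V : Type*} [Fintype V] (E : V → V → Prop) (hT : SemiComplete E)
    (k : ℕ) (hk : 0 < k) (X : Set V) (hX : DegreeTangle E (26 * k) k X) :
    ∃ Z : Set V, Z ⊆ X ∧ ShortJungle E k 3 Z :=
  stmt_7_general E hT k X hX
end

section
/- Let T be a semi-complete digraph. Then every ordering of V(T) that sorts the vertices in nondecreasing order of outdegree has width at most 100·ctw(T)² + 22·ctw(T) + 1. -/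
/-!
Fix an ordering `σ` of optimal width `c`. Every vertex `v` sits in `σ` within distance `c` of
position `outdeg v`: the vertices before `v` that `v` does not dominate send arcs across the cut
at `v`, and the outneighbours of `v` after it receive arcs across the cut just after `v`.
Hence an arc crossing the cut of an outdegree ordering at a vertex of outdegree `d` has its tail
at `σ`-position at most `d + c` and its head at `σ`-position at least `d - c`. If it points
backward in `σ`, both ends lie in this window of `2c + 1` positions; otherwise it crosses one of
the `2c + 2` cuts of `σ` at positions `d - c, …, d + c + 1`, each crossed by at most `c` arcs.
This gives at most `(2c + 1)² + (2c + 2)c` arcs.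
-/

section Ordering

variable {V : Type*} [Fintype V] (E : V → V → Prop) (σ : Fin (Fintype.card V) ≃ V)

def cutArcs (β : ℕ) : Set (V × V) :=
  {p : V × V | ((σ.symm p.1 : ℕ) < β) ∧ ¬ ((σ.symm p.2 : ℕ) < β) ∧ E p.1 p.2}

lemma cutArcs_eq_empty {β : ℕ} (hβ : Fintype.card V ≤ β) : cutArcs E σ β = ∅ :=
  Set.eq_empty_of_forall_notMem fun p hp => hp.2.1 ((σ.symm p.2).isLt.trans_le hβ)

lemma ncard_cutArcs_le_orderWidth (β : ℕ) : (cutArcs E σ β).ncard ≤ orderWidth E σ := by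
  rcases le_or_gt β (Fintype.card V) with hβ | hβ
  · exact le_ciSup (f := fun α : Fin (Fintype.card V + 1) => (cutArcs E σ α).ncard)
      (Set.finite_range _).bddAbove ⟨β, Nat.lt_succ_of_le hβ⟩
  · simp [cutArcs_eq_empty E σ hβ.le]

lemma orderWidth_le_of_forall_lt_card {m : ℕ}
    (h : ∀ k < Fintype.card V, (cutArcs E σ k).ncard ≤ m) : orderWidth E σ ≤ m := by
  refine ciSup_le fun α => show (cutArcs E σ α).ncard ≤ m from ?_
  rcases lt_or_ge (α : ℕ) (Fintype.card V) with hα | hα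
  · exact h α hα
  · simp [cutArcs_eq_empty E σ hα]

lemma exists_orderWidth_eq_cutwidth :
    ∃ σ : Fin (Fintype.card V) ≃ V, orderWidth E σ = cutwidth E :=
  Nat.sInf_mem ⟨_, Set.mem_range_self (Fintype.equivFin V).symm⟩

lemma ncard_setOf_pos_lt {k : ℕ} (hk : k ≤ Fintype.card V) :
    {w : V | (σ.symm w : ℕ) < k}.ncard = k := by
  have hinj : Function.Injective fun w : V => (σ.symm w : ℕ) :=
    Fin.val_injective.comp σ.symm.injective
  have hrange : Set.Iio k ⊆ Set.range fun w : V => (σ.symm w : ℕ) := fun j hj =>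
    ⟨σ ⟨j, lt_of_lt_of_le hj hk⟩, by simp⟩
  exact (Set.ncard_preimage_of_injective_subset_range hinj hrange).trans (Set.ncard_Iio_nat k)

lemma ncard_setOf_pos_mem_Icc_le (a b : ℕ) :
    {w : V | (σ.symm w : ℕ) ∈ Set.Icc a b}.ncard ≤ b + 1 - a := by
  rw [← Set.ncard_Icc_nat]
  exact Set.ncard_le_ncard_of_injOn (fun w => (σ.symm w : ℕ)) (fun _ hw => hw)
    (Fin.val_injective.comp σ.symm.injective).injOn

lemma ncard_inNbrs_before_le (v : V) :
    {w : V | (σ.symm w : ℕ) < σ.symm v ∧ E w v}.ncard ≤ orderWidth E σ :=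
  (Set.ncard_le_ncard_of_injOn (t := cutArcs E σ (σ.symm v)) (fun w => (w, v))
    (fun _ hw => ⟨hw.1, lt_irrefl _, hw.2⟩) (fun _ _ _ _ h => congrArg Prod.fst h)).trans
    (ncard_cutArcs_le_orderWidth E σ _)

lemma ncard_outNbrs_after_le (v : V) :
    {w : V | E v w ∧ (σ.symm v : ℕ) < σ.symm w}.ncard ≤ orderWidth E σ :=
  (Set.ncard_le_ncard_of_injOn (t := cutArcs E σ (σ.symm v + 1)) (fun w => (v, w))
    (fun _ hw => ⟨Nat.lt_succ_self _, by simpa using hw.2, hw.1⟩)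
    (fun _ _ _ _ h => congrArg Prod.snd h)).trans
    (ncard_cutArcs_le_orderWidth E σ (σ.symm v + 1))

variable {E} in
lemma pos_le_outdeg_add_orderWidth (hT : SemiComplete E) (v : V) :
    (σ.symm v : ℕ) ≤ outdeg E v + orderWidth E σ := by
  have hcover : {w : V | (σ.symm w : ℕ) < σ.symm v} ⊆
      {w | E v w} ∪ {w | (σ.symm w : ℕ) < σ.symm v ∧ E w v} := by
    intro w hw
    have hne : v ≠ w := by
      rintro rfl
      exact lt_irrefl _ (show (σ.symm v : ℕ) < σ.symm v from hw)
    exact (hT.2 v w hne).imp id fun h => ⟨hw, h⟩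
  calc (σ.symm v : ℕ) = {w : V | (σ.symm w : ℕ) < σ.symm v}.ncard :=
        (ncard_setOf_pos_lt σ (σ.symm v).isLt.le).symm
    _ ≤ Set.ncard (_ ∪ _) := Set.ncard_le_ncard hcover
    _ ≤ outdeg E v + orderWidth E σ :=
        (Set.ncard_union_le _ _).trans (Nat.add_le_add_left (ncard_inNbrs_before_le E σ v) _)

variable {E} in
lemma outdeg_le_pos_add_orderWidth (hT : SemiComplete E) (v : V) :
    outdeg E v ≤ σ.symm v + orderWidth E σ := by
  have hcover : {w : V | E v w} ⊆
      {w | (σ.symm w : ℕ) < σ.symm v} ∪ {w | E v w ∧ (σ.symm v : ℕ) < σ.symm w} := by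
    intro w hw
    have hne : σ.symm w ≠ σ.symm v := by
      intro h
      rw [σ.symm.injective h] at hw
      exact hT.1 v hw
    rcases lt_or_gt_of_ne (Fin.val_ne_of_ne hne) with h | h
    · exact Or.inl h
    · exact Or.inr ⟨hw, h⟩
  calc outdeg E v ≤ Set.ncard (_ ∪ _) := Set.ncard_le_ncard hcover
    _ ≤ σ.symm v + orderWidth E σ := by
        refine (Set.ncard_union_le _ _).trans ?_
        rw [ncard_setOf_pos_lt σ (σ.symm v).isLt.le]
        exact Nat.add_le_add_left (ncard_outNbrs_after_le E σ v) _

lemma ncard_le_of_forall_pos_near (d r : ℕ) (S : Set (V × V))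
    (hS : ∀ p ∈ S, E p.1 p.2 ∧
      (σ.symm p.1 : ℕ) ≤ d + r ∧ d ≤ (σ.symm p.2 : ℕ) + r) :
    S.ncard ≤ (2 * r + 1) ^ 2 + (2 * r + 2) * orderWidth E σ := by
  set W := {w : V | (σ.symm w : ℕ) ∈ Set.Icc (d - r) (d + r)}
  set cuts := Finset.Icc (d - r) (d + r + 1)
  have hcover : S ⊆ W ×ˢ W ∪ ⋃ β ∈ cuts, cutArcs E σ β := by
    intro p hp
    obtain ⟨hE, h1, h2⟩ := hS p hp
    rcases lt_or_ge (σ.symm p.1 : ℕ) (σ.symm p.2) with hfwd | hbwd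
    · refine Or.inr <|
        Set.mem_biUnion (x := max (d - r) (σ.symm p.1 + 1)) ?_ ⟨?_, ?_, hE⟩
      · simp only [cuts, Finset.coe_Icc, Set.mem_Icc]
        omega
      · omega
      · omega
    · exact Or.inl ⟨⟨by omega, h1⟩, ⟨by omega, by omega⟩⟩
  have hW : (W ×ˢ W).ncard ≤ (2 * r + 1) ^ 2 := by
    have : W.ncard ≤ 2 * r + 1 := (ncard_setOf_pos_mem_Icc_le σ _ _).trans (by omega)
    rw [Set.ncard_prod, sq]
    exact Nat.mul_le_mul this this
  have hcuts : (⋃ β ∈ cuts, cutArcs E σ β).ncard ≤ (2 * r + 2) * orderWidth E σ :=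
    calc _ ≤ ∑ β ∈ cuts, (cutArcs E σ β).ncard := Finset.set_ncard_biUnion_le _ _
      _ ≤ ∑ _β ∈ cuts, orderWidth E σ :=
          Finset.sum_le_sum fun β _ => ncard_cutArcs_le_orderWidth E σ β
      _ ≤ (2 * r + 2) * orderWidth E σ := by
          rw [Finset.sum_const, smul_eq_mul, Nat.card_Icc]
          exact Nat.mul_le_mul_right _ (by omega)
  calc S.ncard ≤ (W ×ˢ W ∪ ⋃ β ∈ cuts, cutArcs E σ β).ncard :=
        Set.ncard_le_ncard hcover
    _ ≤ _ := (Set.ncard_union_le _ _).trans (Nat.add_le_add hW hcuts)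

lemma outdeg_le_of_mem_cutArcs (hmono : Monotone fun i => outdeg E (σ i)) {k : ℕ}
    (hk : k < Fintype.card V) {p : V × V} (hp : p ∈ cutArcs E σ k) :
    outdeg E p.1 ≤ outdeg E (σ ⟨k, hk⟩) ∧ outdeg E (σ ⟨k, hk⟩) ≤ outdeg E p.2 := by
  obtain ⟨h1, h2, -⟩ := hp
  constructor
  · simpa using hmono (show σ.symm p.1 ≤ ⟨k, hk⟩ from Fin.le_def.2 h1.le)
  · simpa using hmono (show ⟨k, hk⟩ ≤ σ.symm p.2 from Fin.le_def.2 (not_lt.1 h2))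

end Ordering

/-- In a semi-complete digraph, any ordering of the vertices by
nondecreasing outdegrees has width at most `100·ctw(T)² + 22·ctw(T) + 1`. -/
theorem stmt_12 {V : Type*} [Fintype V] (E : V → V → Prop) (hT : SemiComplete E)
    (e : Fin (Fintype.card V) ≃ V)
    (hmono : ∀ i j : Fin (Fintype.card V), i ≤ j → outdeg E (e i) ≤ outdeg E (e j)) :
    orderWidth E e ≤ 100 * (cutwidth E) ^ 2 + 22 * cutwidth E + 1 := by
  obtain ⟨σ, hσ⟩ := exists_orderWidth_eq_cutwidth E
  rw [← hσ]
  set c := orderWidth E σ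
  refine orderWidth_le_of_forall_lt_card E e fun k hk => ?_
  set d := outdeg E (e ⟨k, hk⟩)
  have hwindow : ∀ p ∈ cutArcs E e k,
      E p.1 p.2 ∧ (σ.symm p.1 : ℕ) ≤ d + c ∧ d ≤ (σ.symm p.2 : ℕ) + c := by
    intro p hp
    obtain ⟨h1, h2⟩ := outdeg_le_of_mem_cutArcs E e (fun i j h => hmono i j h) hk hp
    have := pos_le_outdeg_add_orderWidth σ hT p.1
    have := outdeg_le_pos_add_orderWidth σ hT p.2
    exact ⟨hp.2.2, by omega, by omega⟩
  calc (cutArcs E e k).ncard ≤ (2 * c + 1) ^ 2 + (2 * c + 2) * c :=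
        ncard_le_of_forall_pos_near E σ d c _ hwindow
    _ ≤ 100 * c ^ 2 + 22 * c + 1 := by nlinarith
end
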